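/- arXiv:1906.02021 — 3 statements merged into one kernel-verified Lean document; each statement's English description precedes it below -/
import Mathlib

section
/- Let G be a finite weighted planar graph with vertices a, b, c, d appearing in that cyclic order on a face F, and let S be a subset of the vertices of F disjoint from {a,b,c,d}. Assume S is a,c-separated, meaning there do not exist three mutually vertex-disjoint paths P1, P2, P3 in G such that P1 connects a to c, P2 connects b to a vertex of S, and P3 connects d to another vertex of S. Denote by M_f(H) the sum of weights of matchings of a subgraph H in which every vertex not in S is matched (vertices of S may be matched or unmatched). Then M_f(G)·M_f(G∖{a,b,c,d}) + M_f(G∖{b,d})·M_f(G∖{a,c}) + M_f(G∖{b})·M_f(G∖{a,c,d}) + M_f(G∖{d})·M_f(G∖{a,b,c}) = M_f(G∖{a,d})·M_f(G∖{b,c}) + M_f(G∖{a,b})·M_f(G∖{c,d}) + M_f(G∖{a})·M_f(G∖{b,c,d}) + M_f(G∖{a,b,d})·M_f(G∖{c}). -/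
open scoped Classical

variable {V : Type*} [Fintype V] [DecidableEq V] {R : Type*} [CommRing R]

/-- `M` is a matching of the induced subgraph of `G` on the vertex set `A`:
a set of edges of `G` contained in `A` that are pairwise vertex-disjoint. -/
def IsMatchingOn (G : SimpleGraph V) (A : Finset V) (M : Finset (Sym2 V)) : Prop :=
  (∀ e ∈ M, e ∈ G.edgeSet) ∧ (∀ e ∈ M, ∀ v ∈ e, v ∈ A) ∧
  (∀ e ∈ M, ∀ f ∈ M, e ≠ f → ∀ v : V, v ∈ e → v ∉ f)

/-- `Mf G w S A` is the total weight (weight of a matching = product of its edge weights)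
of all matchings of the induced subgraph of `G` on `A` in which every vertex of `A` not
belonging to the distinguished ("free") set `S` is matched. -/
noncomputable def Mf (G : SimpleGraph V) (w : Sym2 V → R) (S A : Finset V) : R :=
  ∑ M ∈ Finset.univ.filter
      (fun M : Finset (Sym2 V) =>
        IsMatchingOn G A M ∧ ∀ v ∈ A, v ∉ S → ∃ e ∈ M, v ∈ e),
    ∏ e ∈ M, w e

/-- Two walks are (vertex-)disjoint. -/
def WalkDisjoint {G : SimpleGraph V} {u v u' v' : V} (P : G.Walk u v) (Q : G.Walk u' v') : Prop :=
  ∀ z : V, z ∈ P.support → z ∉ Q.support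

/-- `S` is `a,c`-separated (relative to `b` and `d`): there is no triple of mutually
vertex-disjoint paths `P₁ : a — c`, `P₂ : b — s`, `P₃ : d — t` with `s ≠ t` in `S`. -/
def Separated (G : SimpleGraph V) (S : Finset V) (a b c d : V) : Prop :=
  ¬ ∃ (s t : V) (P₁ : G.Walk a c) (P₂ : G.Walk b s) (P₃ : G.Walk d t),
      s ∈ S ∧ t ∈ S ∧ s ≠ t ∧ P₁.IsPath ∧ P₂.IsPath ∧ P₃.IsPath ∧
      WalkDisjoint P₁ P₂ ∧ WalkDisjoint P₁ P₃ ∧ WalkDisjoint P₂ P₃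

/-- `L` is the boundary cycle of a face of a planar embedding of `G`, on which the four
vertices `a`, `b`, `c`, `d` occur in this cyclic order.  Planarity of the embedding is
encoded through its characteristic combinatorial consequence: two pairs of vertices that
interleave on the boundary cycle of a face can never be joined by two vertex-disjoint
paths of `G`. -/
structure FaceConfig (G : SimpleGraph V) (L : List V) (a b c d : V) : Prop where
  nodup : L.Nodup
  cyclic : ∃ L' : List V, L ~r L' ∧ ∃ i j k l : Fin L'.length,
      i < j ∧ j < k ∧ k < l ∧ L'.get i = a ∧ L'.get j = b ∧ L'.get k = c ∧ L'.get l = d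
  noncrossing : ∀ L' : List V, L ~r L' → ∀ i j k l : Fin L'.length, i < j → j < k → k < l →
      ¬ ∃ (P : G.Walk (L'.get i) (L'.get k)) (Q : G.Walk (L'.get j) (L'.get l)),
          P.IsPath ∧ Q.IsPath ∧ WalkDisjoint P Q

/-!
Write both sides as sums over pairs `(M, N)` of matchings whose sets of unmatched non-free
vertices partition `{a, b, c, d}`: on the left `a, c` are unmatched in `N`, on the right `a` is
unmatched in `M` and `c` in `N`. In the superposition `M ∆ N` every vertex has degree at most
two, and the vertices of degree one are `a, b, c, d` and some vertices of `S`; so the component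
of `a` is a path from `a` to one of them. It cannot end at `c`: then the component of `b` would
be a path to `d`, crossing the path `a — c` inside the face, or to a vertex of `S`, and then the
component of `d` too, against separation. Exchanging `M` and `N` along that path is a
weight-preserving involution that moves `a` from one matching to the other and fixes `c`.
-/

open Finset SimpleGraph
open scoped symmDiff

namespace SimpleGraph

section Paths

variable {V : Type*} {G H : SimpleGraph V}

lemma Walk.IsPath.ncard_neighborSet_toSubgraph_of_ne {u w v : V} {p : G.Walk u w}
    (hp : p.IsPath) (hv : v ∈ p.support) (hvu : v ≠ u) (hvw : v ≠ w) :
    (p.toSubgraph.neighborSet v).ncard = 2 := by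
  obtain ⟨i, rfl, hi⟩ := Walk.mem_support_iff_exists_getVert.mp hv
  refine hp.ncard_neighborSet_toSubgraph_internal_eq_two (by rintro rfl; simp at hvu) ?_
  exact lt_of_le_of_ne hi (by rintro rfl; simp at hvw)

lemma exists_isPath_forall_adj_mem_support [Fintype V] (a : V) :
    ∃ (x : V) (W : G.Walk a x), W.IsPath ∧ ∀ z, G.Adj x z → z ∈ W.support := by
  let IsPathLength : ℕ → Prop := fun n => ∃ (x : V) (W : G.Walk a x), W.IsPath ∧ W.length = n
  obtain ⟨x, W, hW, hlen⟩ : IsPathLength (Nat.findGreatest IsPathLength (Fintype.card V)) :=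
    Nat.findGreatest_spec (Nat.zero_le _) ⟨a, .nil, .nil, rfl⟩
  refine ⟨x, W, hW, fun z hz => ?_⟩
  by_contra hzW
  have hW' := hW.concat hzW hz
  have : (W.concat hz).length ≤ W.length :=
    hlen ▸ Nat.le_findGreatest (P := IsPathLength) hW'.length_lt.le ⟨z, _, hW', rfl⟩
  rw [Walk.length_concat] at this
  omega

lemma Reachable.mem_of_adj_closed {s : Set V} (hs : ∀ u z, u ∈ s → G.Adj u z → z ∈ s)
    {a v : V} (ha : a ∈ s) (h : G.Reachable a v) : v ∈ s := by
  obtain ⟨W⟩ := h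
  induction W with
  | nil => exact ha
  | cons hadj _ ih => exact ih (hs _ _ ha hadj)

lemma Reachable.exists_isPath_mapLe [DecidableEq V] (hHG : H ≤ G) {u v : V}
    (h : H.Reachable u v) : ∃ P : G.Walk u v, P.IsPath ∧ ∀ z ∈ P.support, H.Reachable u z := by
  obtain ⟨W⟩ := h
  refine ⟨W.bypass.mapLe hHG, W.bypass_isPath.mapLe hHG, fun z hz => ?_⟩
  rw [Walk.support_mapLe_eq_support] at hz
  exact (W.bypass.takeUntil z hz).reachable

lemma walkDisjoint_of_not_reachable {u v u' v' : V} {P : G.Walk u v} {Q : G.Walk u' v'}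
    (hP : ∀ z ∈ P.support, H.Reachable u z) (hQ : ∀ z ∈ Q.support, H.Reachable u' z)
    (h : ¬ H.Reachable u u') : WalkDisjoint P Q :=
  fun z hz hz' => h ((hP z hz).trans (hQ z hz').symm)

end Paths

section DegreeAtMostTwo

variable {V : Type*} [Fintype V] {H : SimpleGraph V} [DecidableRel H.Adj]

lemma degree_eq_ncard_neighborSet (v : V) : H.degree v = (H.neighborSet v).ncard := by
  rw [← card_neighborSet_eq_degree, Set.ncard_eq_toFinset_card', Set.toFinset_card]

lemma Subgraph.ncard_neighborSet_le_degree (H' : H.Subgraph) (v : V) :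
    (H'.neighborSet v).ncard ≤ H.degree v := by
  rw [degree_eq_ncard_neighborSet]
  exact Set.ncard_le_ncard (H'.neighborSet_subset v)

lemma Subgraph.ncard_neighborSet_lt_degree (H' : H.Subgraph) {v z : V}
    (hz : H.Adj v z) (hz' : ¬ H'.Adj v z) : (H'.neighborSet v).ncard < H.degree v := by
  rw [degree_eq_ncard_neighborSet]
  exact Set.ncard_lt_ncard ⟨H'.neighborSet_subset v, fun h => hz' (h hz)⟩ (Set.toFinite _)

lemma Walk.IsPath.toSubgraph_adj_of_degree_le_two (hdeg : ∀ v, H.degree v ≤ 2) {a x v z : V}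
    (ha : H.degree a = 1) {W : H.Walk a x} (hW : W.IsPath) (hxa : x ≠ a) (hv : v ∈ W.support)
    (hvx : v ≠ x) (hz : H.Adj v z) : W.toSubgraph.Adj v z := by
  by_contra hz'
  have hlt := W.toSubgraph.ncard_neighborSet_lt_degree hz hz'
  by_cases hva : v = a
  · subst hva
    rw [hW.neighborSet_toSubgraph_startpoint (Walk.not_nil_of_ne hxa.symm), Set.ncard_singleton,
      ha] at hlt
    exact lt_irrefl _ hlt
  · rw [hW.ncard_neighborSet_toSubgraph_of_ne hv hva hvx] at hlt
    exact absurd (hdeg v) (not_le.mpr hlt)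

/-- The component of `a` is the support of a longest path `W` from `a`: the degree bound leaves
no room for edges leaving `W` except at its last vertex, and none leaves there by maximality. -/
theorem exists_reachable_degree_eq_one (hdeg : ∀ v, H.degree v ≤ 2) {a : V}
    (ha : H.degree a = 1) :
    ∃ x ≠ a, H.Reachable a x ∧ H.degree x = 1 ∧
      ∀ v, H.Reachable a v → H.degree v = 1 → v = a ∨ v = x := by
  obtain ⟨x, W, hW, hext⟩ := exists_isPath_forall_adj_mem_support (G := H) a
  have hxa : x ≠ a := by
    rintro rfl
    obtain ⟨z, hz⟩ : (H.neighborSet x).Nonempty := by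
      rw [← Set.ncard_pos, ← degree_eq_ncard_neighborSet, ha]; exact one_pos
    have := hext z hz
    rw [Walk.nil_iff_support_eq.mp (Walk.isPath_iff_nil.mp hW), List.mem_singleton] at this
    exact hz.ne this.symm
  have hsat := fun {v z} => hW.toSubgraph_adj_of_degree_le_two hdeg ha hxa (v := v) (z := z)
  have hcomp : ∀ v, H.Reachable a v → v ∈ W.support := by
    refine fun v => Reachable.mem_of_adj_closed (s := {v | v ∈ W.support}) ?_ W.start_mem_support
    intro u z hu huz
    by_cases hux : u = x
    · exact hux ▸ hext z (hux ▸ huz)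
    · exact W.mem_verts_toSubgraph.mp (hsat hu hux huz).snd_mem
  have hx : H.degree x = 1 := by
    have : H.neighborSet x = W.toSubgraph.neighborSet x :=
      Set.Subset.antisymm (fun y hy => (hsat (hext y hy) (H.ne_of_adj hy).symm hy.symm).symm)
        (W.toSubgraph.neighborSet_subset x)
    rw [degree_eq_ncard_neighborSet, this,
      hW.neighborSet_toSubgraph_endpoint (Walk.not_nil_of_ne hxa.symm), Set.ncard_singleton]
  refine ⟨x, hxa, W.reachable, hx, fun v hv hv1 => ?_⟩
  by_contra! hne
  have := W.toSubgraph.ncard_neighborSet_le_degree v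
  rw [hW.ncard_neighborSet_toSubgraph_of_ne (hcomp v hv) hne.1 hne.2, hv1] at this
  omega

end DegreeAtMostTwo

end SimpleGraph

lemma Separated.reachable_or_reachable {G H : SimpleGraph V} [DecidableRel H.Adj]
    {S : Finset V} {a b c d s : V} (hsep : Separated G S a b c d) (hHG : H ≤ G)
    (hdeg : ∀ v, H.degree v ≤ 2)
    (hend : ∀ v, H.degree v = 1 → v ∉ S → v = a ∨ v = b ∨ v = c ∨ v = d)
    (hd : H.degree d = 1) (hAC : H.Reachable a c) (hBs : H.Reachable b s) (hs : s ∈ S)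
    (hAB : ¬ H.Reachable a b) : H.Reachable a d ∨ H.Reachable b d := by
  by_contra! ⟨hAD, hBD⟩
  obtain ⟨z, hzd, hDz, hz1, -⟩ := exists_reachable_degree_eq_one hdeg hd
  have hzS : z ∈ S := by
    by_contra hzS
    rcases hend z hz1 hzS with rfl | rfl | rfl | rfl
    · exact hAD hDz.symm
    · exact hBD hDz.symm
    · exact hAD (hAC.trans hDz.symm)
    · exact hzd rfl
  have hsz : s ≠ z := by
    rintro rfl
    exact hBD (hBs.trans hDz.symm)
  obtain ⟨P₁, hP₁, hP₁H⟩ := hAC.exists_isPath_mapLe hHG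
  obtain ⟨P₂, hP₂, hP₂H⟩ := hBs.exists_isPath_mapLe hHG
  obtain ⟨P₃, hP₃, hP₃H⟩ := hDz.exists_isPath_mapLe hHG
  exact hsep ⟨s, z, P₁, P₂, P₃, hs, hzS, hsz, hP₁, hP₂, hP₃,
    walkDisjoint_of_not_reachable hP₁H hP₂H hAB, walkDisjoint_of_not_reachable hP₁H hP₃H hAD,
    walkDisjoint_of_not_reachable hP₂H hP₃H hBD⟩

theorem not_reachable_of_separated {G H : SimpleGraph V} [DecidableRel H.Adj] {S : Finset V}
    {a b c d : V} (hHG : H ≤ G) (hdeg : ∀ v, H.degree v ≤ 2)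
    (hone : ∀ v ∉ S, H.degree v = 1 ↔ v ∈ ({a, b, c, d} : Finset V))
    (hdisj : Disjoint S {a, b, c, d})
    (hab : a ≠ b) (hac : a ≠ c) (had : a ≠ d) (hbc : b ≠ c) (hbd : b ≠ d) (hcd : c ≠ d)
    (hnc : ¬ ∃ (P : G.Walk a c) (Q : G.Walk b d), P.IsPath ∧ Q.IsPath ∧ WalkDisjoint P Q)
    (hsep : Separated G S a b c d) :
    ¬ H.Reachable a c := by
  intro hAC
  have hdeg1 : ∀ v ∈ ({a, b, c, d} : Finset V), H.degree v = 1 :=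
    fun v hv => (hone v (Finset.disjoint_right.mp hdisj hv)).mpr hv
  have hend : ∀ v, H.degree v = 1 → v ∉ S → v = a ∨ v = b ∨ v = c ∨ v = d := by
    intro v h hv
    simpa using (hone v hv).mp h
  obtain ⟨x, -, -, -, hA⟩ := exists_reachable_degree_eq_one hdeg (hdeg1 a (by simp))
  obtain rfl : c = x := (hA c hAC (hdeg1 c (by simp))).resolve_left hac.symm
  have hAB : ¬ H.Reachable a b := fun h => by
    rcases hA b h (hdeg1 b (by simp)) with h | h
    exacts [hab h.symm, hbc h]
  have hAD : ¬ H.Reachable a d := fun h => by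
    rcases hA d h (hdeg1 d (by simp)) with h | h
    exacts [had h.symm, hcd h.symm]
  obtain ⟨y, hyb, hBy, hy1, hB⟩ := exists_reachable_degree_eq_one hdeg (hdeg1 b (by simp))
  by_cases hyS : y ∈ S
  · have hBD : ¬ H.Reachable b d := fun h => by
      rcases hB d h (hdeg1 d (by simp)) with h | rfl
      exacts [hbd h.symm, Finset.disjoint_left.mp hdisj hyS (by simp)]
    exact (hsep.reachable_or_reachable hHG hdeg hend (hdeg1 d (by simp)) hAC hBy hyS hAB).elim
      hAD hBD
  · rcases hend y hy1 hyS with rfl | rfl | rfl | rfl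
    · exact hAB hBy.symm
    · exact hyb rfl
    · exact hAB (hAC.trans hBy.symm)
    · obtain ⟨P₁, hP₁, hP₁H⟩ := hAC.exists_isPath_mapLe hHG
      obtain ⟨P₂, hP₂, hP₂H⟩ := hBy.exists_isPath_mapLe hHG
      exact hnc ⟨P₁, P₂, hP₁, hP₂, walkDisjoint_of_not_reachable hP₁H hP₂H hAB⟩

namespace FaceConfig

variable {V : Type*} {G : SimpleGraph V} {L : List V} {a b c d : V}

lemma pairwise_ne (h : FaceConfig G L a b c d) :
    a ≠ b ∧ a ≠ c ∧ a ≠ d ∧ b ≠ c ∧ b ≠ d ∧ c ≠ d := by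
  obtain ⟨L', hrot, i, j, k, l, hij, hjk, hkl, rfl, rfl, rfl, rfl⟩ := h.cyclic
  have hinj : ∀ {x y : Fin L'.length}, L'.get x = L'.get y ↔ x = y :=
    (hrot.nodup_iff.mp h.nodup).get_inj_iff
  simp only [ne_eq, hinj, Fin.ext_iff]
  omega

lemma not_exists_disjoint_paths (h : FaceConfig G L a b c d) :
    ¬ ∃ (P : G.Walk a c) (Q : G.Walk b d), P.IsPath ∧ Q.IsPath ∧ WalkDisjoint P Q := by
  obtain ⟨L', hrot, i, j, k, l, hij, hjk, hkl, rfl, rfl, rfl, rfl⟩ := h.cyclic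
  exact h.noncrossing L' hrot i j k l hij hjk hkl

end FaceConfig

namespace Finset

variable {α M : Type*} [DecidableEq α]

lemma card_symmDiff_eq_one_iff {s t : Finset α} (hs : #s ≤ 1) (ht : #t ≤ 1) :
    #(s ∆ t) = 1 ↔ (s = ∅ ↔ t.Nonempty) := by
  rcases s.eq_empty_or_nonempty with rfl | hs'
  · rw [← bot_eq_empty, bot_symmDiff, ← card_pos]
    simp only [true_iff]
    omega
  rcases t.eq_empty_or_nonempty with rfl | ht'
  · rw [← bot_eq_empty, symmDiff_bot, bot_eq_empty]
    simp only [hs'.ne_empty, Finset.not_nonempty_empty, iff_true]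
    have := card_pos.mpr hs'
    omega
  obtain ⟨x, rfl⟩ := card_eq_one.mp (le_antisymm hs (card_pos.mpr hs'))
  obtain ⟨y, rfl⟩ := card_eq_one.mp (le_antisymm ht (card_pos.mpr ht'))
  by_cases hxy : x = y
  · simp [hxy]
  · have : ({x} : Finset α) ∆ {y} = {x, y} := by
      ext z; simp only [mem_symmDiff, mem_singleton, mem_insert]; grind
    simp [this, hxy]

lemma prod_symmDiff_mul_prod_symmDiff [CommMonoid M] {s t u : Finset α} (hu : u ⊆ s ∆ t)
    (f : α → M) :
    (∏ x ∈ s ∆ u, f x) * ∏ x ∈ t ∆ u, f x = (∏ x ∈ s, f x) * ∏ x ∈ t, f x := by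
  have hunion : s ∆ u ∪ t ∆ u = s ∪ t := by
    ext x; have := @hu x; simp only [mem_union, mem_symmDiff] at this ⊢; tauto
  have hinter : s ∆ u ∩ t ∆ u = s ∩ t := by
    ext x; have := @hu x; simp only [mem_inter, mem_symmDiff] at this ⊢; tauto
  rw [← prod_union_inter, hunion, hinter, prod_union_inter]

lemma sum_powerset_singleton [AddCommMonoid M] (x : α) (f : Finset α → M) :
    ∑ X ∈ ({x} : Finset α).powerset, f X = f ∅ + f {x} := by
  rw [← insert_empty, sum_powerset_insert (notMem_empty x), powerset_empty, sum_singleton,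
    sum_singleton]

end Finset

section Incidence

variable {V : Type*} [DecidableEq V]

def incidentEdges (F : Finset (Sym2 V)) (v : V) : Finset (Sym2 V) := {e ∈ F | v ∈ e}

@[simp]
lemma mem_incidentEdges {F : Finset (Sym2 V)} {v : V} {e : Sym2 V} :
    e ∈ incidentEdges F v ↔ e ∈ F ∧ v ∈ e :=
  Finset.mem_filter

lemma incidentEdges_eq_empty {F : Finset (Sym2 V)} {v : V} :
    incidentEdges F v = ∅ ↔ ∀ e ∈ F, v ∉ e :=
  Finset.filter_eq_empty_iff

lemma incidentEdges_symmDiff (M N : Finset (Sym2 V)) (v : V) :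
    incidentEdges (M ∆ N) v = incidentEdges M v ∆ incidentEdges N v := by
  ext e
  simp only [mem_incidentEdges, Finset.mem_symmDiff]
  tauto

lemma forall_card_incidentEdges_le_one_iff {M : Finset (Sym2 V)} :
    (∀ v, #(incidentEdges M v) ≤ 1) ↔ ∀ e ∈ M, ∀ f ∈ M, e ≠ f → ∀ v, v ∈ e → v ∉ f := by
  simp only [Finset.card_le_one, mem_incidentEdges]
  grind

def IsEdgeMatching (G : SimpleGraph V) (M : Finset (Sym2 V)) : Prop :=
  (∀ e ∈ M, e ∈ G.edgeSet) ∧ ∀ v, #(incidentEdges M v) ≤ 1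

lemma IsEdgeMatching.of_incidentEdges {G : SimpleGraph V} {M N M' : Finset (Sym2 V)}
    (hM : IsEdgeMatching G M) (hN : IsEdgeMatching G N) (hM' : M' ⊆ M ∪ N)
    (h : ∀ v, incidentEdges M' v = incidentEdges M v ∨ incidentEdges M' v = incidentEdges N v) :
    IsEdgeMatching G M' := by
  refine ⟨fun e he => ?_, fun v => ?_⟩
  · rcases Finset.mem_union.mp (hM' he) with h | h
    exacts [hM.1 e h, hN.1 e h]
  · rcases h v with h | h <;> rw [h]
    exacts [hM.2 v, hN.2 v]

end Incidence

section Superposition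

variable {V : Type*} [Fintype V] [DecidableEq V]

def uncovered (S : Finset V) (M : Finset (Sym2 V)) : Finset V :=
  {v | v ∉ S ∧ incidentEdges M v = ∅}

@[simp]
lemma mem_uncovered {S : Finset V} {M : Finset (Sym2 V)} {v : V} :
    v ∈ uncovered S M ↔ v ∉ S ∧ incidentEdges M v = ∅ := by
  simp [uncovered]

lemma degree_fromEdgeSet {D : Finset (Sym2 V)} (hD : ∀ e ∈ D, ¬ e.IsDiag) (v : V) :
    (fromEdgeSet (D : Set (Sym2 V))).degree v = #(incidentEdges D v) := by
  rw [← card_incidenceFinset_eq_degree]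
  congr 1
  ext e
  simp only [mem_incidenceFinset, incidenceSet, edgeSet_fromEdgeSet, Set.mem_ofPred_eq,
    Set.mem_sdiff, Finset.mem_coe, mem_incidentEdges]
  exact ⟨fun h => ⟨h.1.1, h.2⟩, fun h => ⟨⟨h.1, hD e h.1⟩, h.2⟩⟩

noncomputable def componentEdges (D : Finset (Sym2 V)) (a : V) : Finset (Sym2 V) :=
  {e ∈ D | ∀ v ∈ e, (fromEdgeSet (D : Set (Sym2 V))).Reachable a v}

lemma componentEdges_subset (D : Finset (Sym2 V)) (a : V) : componentEdges D a ⊆ D :=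
  Finset.filter_subset _ _

lemma incidentEdges_componentEdges (D : Finset (Sym2 V)) (a v : V) :
    incidentEdges (componentEdges D a) v =
      if (fromEdgeSet (D : Set (Sym2 V))).Reachable a v then incidentEdges D v else ∅ := by
  split_ifs with hv
  · ext e
    simp only [mem_incidentEdges, componentEdges, Finset.mem_filter]
    refine ⟨fun h => ⟨h.1.1, h.2⟩, fun ⟨he, hve⟩ => ⟨⟨he, fun u hu => ?_⟩, hve⟩⟩
    obtain ⟨u', rfl⟩ := Sym2.mem_iff_exists.mp hve
    rcases Sym2.mem_iff.mp hu with rfl | rfl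
    · exact hv
    · by_cases hvu : v = u
      · exact hvu ▸ hv
      · exact hv.trans ((fromEdgeSet_adj _).mpr ⟨he, hvu⟩).reachable
  · ext e
    simp only [mem_incidentEdges, componentEdges, Finset.mem_filter, Finset.notMem_empty,
      iff_false, not_and]
    exact fun ⟨_, hall⟩ hve => hv (hall v hve)

abbrev superposition (p : Finset (Sym2 V) × Finset (Sym2 V)) : SimpleGraph V :=
  fromEdgeSet ((p.1 ∆ p.2 : Finset (Sym2 V)) : Set (Sym2 V))

noncomputable def swapAt (a : V) (p : Finset (Sym2 V) × Finset (Sym2 V)) :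
    Finset (Sym2 V) × Finset (Sym2 V) :=
  (p.1 ∆ componentEdges (p.1 ∆ p.2) a, p.2 ∆ componentEdges (p.1 ∆ p.2) a)

lemma swapAt_fst_symmDiff_snd (a : V) (p : Finset (Sym2 V) × Finset (Sym2 V)) :
    (swapAt a p).1 ∆ (swapAt a p).2 = p.1 ∆ p.2 := by
  simp only [swapAt, symmDiff_symmDiff_symmDiff_comm, symmDiff_self, symmDiff_bot]

lemma swapAt_swapAt (a : V) (p : Finset (Sym2 V) × Finset (Sym2 V)) :
    swapAt a (swapAt a p) = p := by
  rw [swapAt, swapAt_fst_symmDiff_snd]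
  simp only [swapAt, symmDiff_symmDiff_cancel_right]

lemma prod_swapAt {M : Type*} [CommMonoid M] (a : V) (p : Finset (Sym2 V) × Finset (Sym2 V))
    (f : Sym2 V → M) :
    (∏ e ∈ (swapAt a p).1, f e) * ∏ e ∈ (swapAt a p).2, f e =
      (∏ e ∈ p.1, f e) * ∏ e ∈ p.2, f e :=
  Finset.prod_symmDiff_mul_prod_symmDiff (componentEdges_subset _ a) f

lemma swapAt_fst_subset (a : V) (p : Finset (Sym2 V) × Finset (Sym2 V)) :
    (swapAt a p).1 ⊆ p.1 ∪ p.2 := by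
  intro e he
  rcases Finset.mem_symmDiff.mp he with ⟨h, -⟩ | ⟨h, -⟩
  · exact Finset.mem_union_left _ h
  · exact symmDiff_le_sup (α := Finset (Sym2 V)) (componentEdges_subset _ a h)

lemma swapAt_snd_subset (a : V) (p : Finset (Sym2 V) × Finset (Sym2 V)) :
    (swapAt a p).2 ⊆ p.1 ∪ p.2 := by
  intro e he
  rcases Finset.mem_symmDiff.mp he with ⟨h, -⟩ | ⟨h, -⟩
  · exact Finset.mem_union_right _ h
  · exact symmDiff_le_sup (α := Finset (Sym2 V)) (componentEdges_subset _ a h)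

lemma incidentEdges_swapAt_fst (a v : V) (p : Finset (Sym2 V) × Finset (Sym2 V)) :
    incidentEdges (swapAt a p).1 v =
      if (superposition p).Reachable a v then incidentEdges p.2 v else incidentEdges p.1 v := by
  rw [swapAt, incidentEdges_symmDiff, incidentEdges_componentEdges]
  split_ifs
  · rw [incidentEdges_symmDiff, symmDiff_symmDiff_cancel_left]
  · rw [← Finset.bot_eq_empty, symmDiff_bot]

lemma incidentEdges_swapAt_snd (a v : V) (p : Finset (Sym2 V) × Finset (Sym2 V)) :
    incidentEdges (swapAt a p).2 v =
      if (superposition p).Reachable a v then incidentEdges p.1 v else incidentEdges p.2 v := by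
  rw [swapAt, incidentEdges_symmDiff, incidentEdges_componentEdges]
  split_ifs
  · rw [incidentEdges_symmDiff, symmDiff_comm (incidentEdges p.1 v),
      symmDiff_symmDiff_cancel_left]
  · rw [← Finset.bot_eq_empty, symmDiff_bot]

lemma mem_uncovered_swapAt_fst {S : Finset V} {a v : V} {p : Finset (Sym2 V) × Finset (Sym2 V)} :
    v ∈ uncovered S (swapAt a p).1 ↔
      if (superposition p).Reachable a v then v ∈ uncovered S p.2 else v ∈ uncovered S p.1 := by
  simp only [mem_uncovered, incidentEdges_swapAt_fst]
  split_ifs <;> rfl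

lemma mem_uncovered_swapAt_snd {S : Finset V} {a v : V} {p : Finset (Sym2 V) × Finset (Sym2 V)} :
    v ∈ uncovered S (swapAt a p).2 ↔
      if (superposition p).Reachable a v then v ∈ uncovered S p.1 else v ∈ uncovered S p.2 := by
  simp only [mem_uncovered, incidentEdges_swapAt_snd]
  split_ifs <;> rfl

/-- The pairs `(M, N)` counted by `Mf G w S (univ \ X) * Mf G w S (univ \ (T \ X))` for some
`X ⊆ T`. -/
structure IsComplementaryPair (G : SimpleGraph V) (S T : Finset V)
    (p : Finset (Sym2 V) × Finset (Sym2 V)) : Prop where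
  isEdgeMatching_fst : IsEdgeMatching G p.1
  isEdgeMatching_snd : IsEdgeMatching G p.2
  uncovered_fst_subset : uncovered S p.1 ⊆ T
  uncovered_snd_eq : uncovered S p.2 = T \ uncovered S p.1

variable {G : SimpleGraph V} {S T : Finset V} {p : Finset (Sym2 V) × Finset (Sym2 V)} {a c : V}

namespace IsComplementaryPair

lemma superposition_le (hp : IsComplementaryPair G S T p) :
    superposition p ≤ G := by
  intro u v huv
  rw [fromEdgeSet_adj, Finset.mem_coe, Finset.mem_symmDiff] at huv
  rcases huv.1 with ⟨h, -⟩ | ⟨h, -⟩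
  exacts [hp.isEdgeMatching_fst.1 _ h, hp.isEdgeMatching_snd.1 _ h]

lemma degree_superposition (hp : IsComplementaryPair G S T p) (v : V) :
    (superposition p).degree v =
      #(incidentEdges p.1 v ∆ incidentEdges p.2 v) := by
  rw [degree_fromEdgeSet, incidentEdges_symmDiff]
  intro e he
  rcases Finset.mem_symmDiff.mp he with ⟨h, -⟩ | ⟨h, -⟩
  exacts [G.not_isDiag_of_mem_edgeSet (hp.isEdgeMatching_fst.1 e h),
    G.not_isDiag_of_mem_edgeSet (hp.isEdgeMatching_snd.1 e h)]

lemma degree_le_two (hp : IsComplementaryPair G S T p) (v : V) :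
    (superposition p).degree v ≤ 2 := by
  rw [hp.degree_superposition]
  exact (Finset.card_le_card (symmDiff_le_sup (α := Finset (Sym2 V)))).trans
    ((Finset.card_union_le _ _).trans
      (add_le_add (hp.isEdgeMatching_fst.2 v) (hp.isEdgeMatching_snd.2 v)))

lemma degree_eq_one_iff (hp : IsComplementaryPair G S T p) {v : V} (hv : v ∉ S) :
    (superposition p).degree v = 1 ↔ v ∈ T := by
  rw [hp.degree_superposition,
    Finset.card_symmDiff_eq_one_iff (hp.isEdgeMatching_fst.2 v) (hp.isEdgeMatching_snd.2 v),
    Finset.nonempty_iff_ne_empty]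
  have h₁ : v ∈ uncovered S p.1 → v ∈ T := fun h => hp.uncovered_fst_subset h
  have h₂ := Finset.ext_iff.mp hp.uncovered_snd_eq v
  simp only [mem_uncovered, hv, not_false_eq_true, true_and, Finset.mem_sdiff] at h₁ h₂
  tauto

lemma swapAt (hp : IsComplementaryPair G S T p) : IsComplementaryPair G S T (swapAt a p) := by
  have h₁ : ∀ v, v ∈ uncovered S p.1 → v ∈ T := fun v h => hp.uncovered_fst_subset h
  have h₂ := fun v => Finset.ext_iff.mp hp.uncovered_snd_eq v
  simp only [Finset.mem_sdiff] at h₂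
  refine ⟨hp.isEdgeMatching_fst.of_incidentEdges hp.isEdgeMatching_snd (swapAt_fst_subset a p)
      fun v => by rw [incidentEdges_swapAt_fst]; exact (ite_eq_or_eq ..).symm,
    hp.isEdgeMatching_fst.of_incidentEdges hp.isEdgeMatching_snd (swapAt_snd_subset a p)
      fun v => by rw [incidentEdges_swapAt_snd]; exact ite_eq_or_eq ..,
    fun v hv => ?_, Finset.ext fun v => ?_⟩
  · rw [mem_uncovered_swapAt_fst] at hv
    split_ifs at hv <;> grind
  · rw [Finset.mem_sdiff, mem_uncovered_swapAt_fst, mem_uncovered_swapAt_snd]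
    split_ifs <;> grind

lemma mem_uncovered_swapAt_fst_self_iff (hp : IsComplementaryPair G S T p) (ha : a ∈ T) :
    a ∈ uncovered S (_root_.swapAt a p).1 ↔ a ∉ uncovered S p.1 := by
  rw [mem_uncovered_swapAt_fst, if_pos (Reachable.refl a), hp.uncovered_snd_eq,
    Finset.mem_sdiff, and_iff_right ha]

end IsComplementaryPair

/-- The involution `swapAt a` toggles whether `a` is uncovered by the first matching and, `c`
lying in another component, leaves `c` alone. -/
theorem sum_filter_notMem_uncovered_eq_sum_filter_mem_uncovered {M : Type*} [AddCommMonoid M]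
    (ha : a ∈ T)
    (hac : ∀ p, IsComplementaryPair G S T p → ¬ (superposition p).Reachable a c)
    (f : Finset (Sym2 V) × Finset (Sym2 V) → M) (hf : ∀ p, f (swapAt a p) = f p) :
    ∑ p with IsComplementaryPair G S T p ∧ a ∉ uncovered S p.1 ∧ c ∉ uncovered S p.1, f p =
      ∑ p with IsComplementaryPair G S T p ∧ a ∈ uncovered S p.1 ∧ c ∉ uncovered S p.1, f p := by
  have hswap : ∀ p, IsComplementaryPair G S T p →
      IsComplementaryPair G S T (swapAt a p) ∧
        (a ∈ uncovered S (swapAt a p).1 ↔ a ∉ uncovered S p.1) ∧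
        (c ∈ uncovered S (swapAt a p).1 ↔ c ∈ uncovered S p.1) :=
    fun p hp => ⟨hp.swapAt, hp.mem_uncovered_swapAt_fst_self_iff ha,
      by rw [mem_uncovered_swapAt_fst, if_neg (hac p hp)]⟩
  refine Finset.sum_nbij' (swapAt a) (swapAt a) (fun p hp => ?_) (fun p hp => ?_)
    (fun p _ => swapAt_swapAt a p) (fun p _ => swapAt_swapAt a p) (fun p _ => (hf p).symm)
  all_goals
    simp only [Finset.mem_filter, Finset.mem_univ, true_and] at hp ⊢
    obtain ⟨h, ha', hc'⟩ := hswap p hp.1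
    tauto

end Superposition

section Weights

variable {G : SimpleGraph V} {w : Sym2 V → R} {S T : Finset V}

lemma Mf_univ_sdiff (hST : Disjoint S T) :
    Mf G w S (univ \ T) = ∑ M with IsEdgeMatching G M ∧ uncovered S M = T, ∏ e ∈ M, w e := by
  refine Finset.sum_congr (Finset.filter_congr fun M _ => ?_) fun _ _ => rfl
  have hT : ∀ v ∈ T, v ∉ S := fun v hv hvS => Finset.disjoint_left.mp hST hvS hv
  rw [IsMatchingOn, IsEdgeMatching, forall_card_incidentEdges_le_one_iff, Finset.ext_iff]
  simp only [mem_uncovered, incidentEdges_eq_empty, Finset.mem_sdiff, Finset.mem_univ, true_and]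
  grind

theorem sum_powerset_filter_Mf_mul_Mf (hST : Disjoint S T) (φ : Finset V → Prop)
    [DecidablePred φ] :
    ∑ X ∈ T.powerset with φ X, Mf G w S (univ \ X) * Mf G w S (univ \ (T \ X)) =
      ∑ p with IsComplementaryPair G S T p ∧ φ (uncovered S p.1),
        (∏ e ∈ p.1, w e) * ∏ e ∈ p.2, w e := by
  symm
  refine (Finset.sum_fiberwise_of_maps_to (g := fun p => uncovered S p.1) ?_ _).symm.trans
    (Finset.sum_congr rfl fun X hX => ?_)
  · intro p hp
    simp only [Finset.mem_filter, Finset.mem_univ, true_and, Finset.mem_powerset] at hp ⊢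
    exact ⟨hp.1.uncovered_fst_subset, hp.2⟩
  simp only [Finset.mem_filter, Finset.mem_powerset] at hX
  rw [Mf_univ_sdiff (Finset.disjoint_of_subset_right hX.1 hST),
    Mf_univ_sdiff (Finset.disjoint_of_subset_right Finset.sdiff_subset hST), Finset.sum_mul_sum,
    ← Finset.sum_product']
  refine Finset.sum_congr ?_ fun _ _ => rfl
  ext p
  simp only [Finset.mem_filter, Finset.mem_univ, true_and, Finset.mem_product]
  constructor
  · rintro ⟨⟨hp, -⟩, rfl⟩
    exact ⟨⟨hp.isEdgeMatching_fst, rfl⟩, hp.isEdgeMatching_snd, hp.uncovered_snd_eq⟩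
  · rintro ⟨⟨h₁, rfl⟩, h₂, h₂'⟩
    exact ⟨⟨⟨h₁, h₂, hX.1, h₂'⟩, hX.2⟩, rfl⟩

end Weights

section Expansion

variable {V : Type*} [DecidableEq V] {M : Type*} [AddCommMonoid M] {a b c d : V}

lemma sum_powerset_filter_notMem_notMem (hab : a ≠ b) (hac : a ≠ c) (had : a ≠ d)
    (hbc : b ≠ c) (hbd : b ≠ d) (hcd : c ≠ d) (g : Finset V → Finset V → M) :
    ∑ X ∈ ({a, b, c, d} : Finset V).powerset with a ∉ X ∧ c ∉ X, g X ({a, b, c, d} \ X) =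
      g ∅ {a, b, c, d} + g {b, d} {a, c} + g {b} {a, c, d} + g {d} {a, b, c} := by
  rw [Finset.sum_filter]
  simp [Finset.sum_powerset_insert, Finset.sum_powerset_singleton, hab, hac, had, hbc, hbd, hcd,
    hac.symm, hbc.symm]
  rw [show ({a, b, c, d} : Finset V) \ {d} = {a, b, c} by ext; simp; grind,
    show ({a, b, c, d} : Finset V) \ {b} = {a, c, d} by ext; simp; grind,
    show ({a, b, c, d} : Finset V) \ {b, d} = {a, c} by ext; simp; grind]
  abel

lemma sum_powerset_filter_mem_notMem (hab : a ≠ b) (hac : a ≠ c) (had : a ≠ d)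
    (hbc : b ≠ c) (hbd : b ≠ d) (hcd : c ≠ d) (g : Finset V → Finset V → M) :
    ∑ X ∈ ({a, b, c, d} : Finset V).powerset with a ∈ X ∧ c ∉ X, g X ({a, b, c, d} \ X) =
      g {a, d} {b, c} + g {a, b} {c, d} + g {a} {b, c, d} + g {a, b, d} {c} := by
  rw [Finset.sum_filter]
  simp [Finset.sum_powerset_insert, Finset.sum_powerset_singleton, hab, hac, had, hbc, hbd, hcd,
    hac.symm, hbc.symm]
  rw [show ({b, c, d} : Finset V) \ {a} = {b, c, d} by ext; simp; grind,
    show ({b, c, d} : Finset V) \ {a, d} = {b, c} by ext; simp; grind,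
    show ({b, c, d} : Finset V) \ {a, b} = {c, d} by ext; simp; grind,
    show ({b, c, d} : Finset V) \ {a, b, d} = {c} by ext; simp; grind]
  abel

end Expansion

theorem free_boundary_kuo_eight_term_general
    (G : SimpleGraph V) (w : Sym2 V → R) (L : List V) (S : Finset V) (a b c d : V)
    (hface : FaceConfig G L a b c d)
    (hdisj : Disjoint S ({a, b, c, d} : Finset V))
    (hsep : Separated G S a b c d) :
    Mf G w S Finset.univ * Mf G w S (Finset.univ \ {a, b, c, d}) +
      Mf G w S (Finset.univ \ {b, d}) * Mf G w S (Finset.univ \ {a, c}) +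
      Mf G w S (Finset.univ \ {b}) * Mf G w S (Finset.univ \ {a, c, d}) +
      Mf G w S (Finset.univ \ {d}) * Mf G w S (Finset.univ \ {a, b, c}) =
    Mf G w S (Finset.univ \ {a, d}) * Mf G w S (Finset.univ \ {b, c}) +
      Mf G w S (Finset.univ \ {a, b}) * Mf G w S (Finset.univ \ {c, d}) +
      Mf G w S (Finset.univ \ {a}) * Mf G w S (Finset.univ \ {b, c, d}) +
      Mf G w S (Finset.univ \ {a, b, d}) * Mf G w S (Finset.univ \ {c}) := by
  obtain ⟨hab, hac, had, hbc, hbd, hcd⟩ := hface.pairwise_ne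
  have hsplit : ∀ p, IsComplementaryPair G S {a, b, c, d} p → ¬ (superposition p).Reachable a c :=
    fun p hp => not_reachable_of_separated hp.superposition_le hp.degree_le_two
      (fun v hv => hp.degree_eq_one_iff hv) hdisj hab hac had hbc hbd hcd
      hface.not_exists_disjoint_paths hsep
  have key := sum_filter_notMem_uncovered_eq_sum_filter_mem_uncovered (by simp) hsplit
    (fun p => (∏ e ∈ p.1, w e) * ∏ e ∈ p.2, w e) (fun p => prod_swapAt a p w)
  let g : Finset V → Finset V → R := fun X Y => Mf G w S (univ \ X) * Mf G w S (univ \ Y)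
  nth_rw 1 [← Finset.sdiff_empty (s := (univ : Finset V))]
  calc _ = _ := (sum_powerset_filter_notMem_notMem hab hac had hbc hbd hcd g).symm
    _ = _ := sum_powerset_filter_Mf_mul_Mf hdisj (fun X => a ∉ X ∧ c ∉ X)
    _ = _ := key
    _ = _ := (sum_powerset_filter_Mf_mul_Mf hdisj (fun X => a ∈ X ∧ c ∉ X)).symm
    _ = _ := sum_powerset_filter_mem_notMem hab hac had hbc hbd hcd g

/-- **Free-boundary Kuo condensation, eight-term version** (Theorem 1 of the paper).
`G` is a weighted planar graph with `a, b, c, d` in cyclic order on a face whose boundary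
cycle is `L`; `S` is a set of vertices of that face, disjoint from `{a,b,c,d}` and
`a,c`-separated.  Then the eight-term matching identity holds, where deleting vertices is
expressed by restricting matchings to the complementary vertex set. -/
theorem free_boundary_kuo_eight_term
    (G : SimpleGraph V) (w : Sym2 V → R) (L : List V) (S : Finset V) (a b c d : V)
    (hface : FaceConfig G L a b c d)
    (hSL : ∀ s ∈ S, s ∈ L)
    (hdisj : Disjoint S ({a, b, c, d} : Finset V))
    (hsep : Separated G S a b c d) :
    Mf G w S Finset.univ * Mf G w S (Finset.univ \ {a, b, c, d}) +
      Mf G w S (Finset.univ \ {b, d}) * Mf G w S (Finset.univ \ {a, c}) +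
      Mf G w S (Finset.univ \ {b}) * Mf G w S (Finset.univ \ {a, c, d}) +
      Mf G w S (Finset.univ \ {d}) * Mf G w S (Finset.univ \ {a, b, c}) =
    Mf G w S (Finset.univ \ {a, d}) * Mf G w S (Finset.univ \ {b, c}) +
      Mf G w S (Finset.univ \ {a, b}) * Mf G w S (Finset.univ \ {c, d}) +
      Mf G w S (Finset.univ \ {a}) * Mf G w S (Finset.univ \ {b, c, d}) +
      Mf G w S (Finset.univ \ {a, b, d}) * Mf G w S (Finset.univ \ {c}) :=
  free_boundary_kuo_eight_term_general G w L S a b c d hface hdisj hsep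
end

section
/- For fixed nonnegative integers k and p, as x → ∞ the product P₂ = ∏_{i=0}^{p-1} (2x+p-2i)_{x-k-1} / (x+k+p-2i)_{x-k-1} satisfies P₂ ∼ 3^{3xp - pk - p/2} / 2^{4xp}, where (a)_m = Γ(a+m)/Γ(a) is the Pochhammer symbol. -/
/-!
For large `x` the `i`-th factor equals `(3x+r₁)! (x+r₂)! / ((2x+r₃)! (2x+r₄)!)` with integer
shifts satisfying `r₁ + r₂ = r₃ + r₄`. A factorial shifted by a fixed integer `r` is asymptotically
`n! nʳ`, and the resulting powers of `x` cancel, leaving the constant `3^r₁ / 2^(r₃+r₄)`. Stirling's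
formula gives `(3x)! x! / ((2x)!)² ∼ (√3/2)(27/16)^x`. The product over `i` then only needs
`∑_{i<p} (p - 2i) = p`.
-/

open Filter Asymptotics

/-- The Pochhammer symbol (rising factorial) `(a)_m = a(a+1)⋯(a+m-1)`. -/
def pochR (a : ℝ) (m : ℕ) : ℝ := ∏ i ∈ Finset.range m, (a + i)

open Real Finset Nat

theorem factorial_add_isEquivalent (d : ℕ) :
    (fun n : ℕ => ((n + d)! : ℝ)) ~[atTop] fun n => (n ! : ℝ) * (n : ℝ) ^ d := by
  have hasc (n : ℕ) : ((n + d)! : ℝ) = n ! * ∏ i ∈ range d, ((n : ℝ) + (i + 1)) := by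
    rw [← Nat.factorial_mul_ascFactorial, Nat.ascFactorial_eq_prod_range]
    push_cast
    ring_nf
  have hcast : Tendsto (norm ∘ fun n : ℕ => (n : ℝ)) atTop atTop := by
    simpa [Function.comp_def] using tendsto_natCast_atTop_atTop
  have hprod : (fun n : ℕ => ∏ i ∈ range d, ((n : ℝ) + (i + 1))) ~[atTop] fun n => (n : ℝ) ^ d := by
    simpa using IsEquivalent.finsetProd (s := range d)
      fun i _ => IsEquivalent.refl.add_const_of_norm_tendsto_atTop hcast
  simp_rw [hasc]
  exact IsEquivalent.refl.mul hprod

theorem factorial_toNat_add_isEquivalent (c : ℤ) :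
    (fun n : ℕ => (((n : ℤ) + c).toNat ! : ℝ)) ~[atTop] fun n => (n ! : ℝ) * (n : ℝ) ^ c := by
  obtain ⟨d, rfl | rfl⟩ := Int.eq_nat_or_neg c
  · have htoNat (n : ℕ) : ((n : ℤ) + d).toNat = n + d := by omega
    simpa [htoNat, zpow_natCast] using factorial_add_isEquivalent d
  have hshift : (fun n : ℕ => (n ! : ℝ)) ~[atTop] fun n => ((n - d)! : ℝ) * (n : ℝ) ^ d := by
    have hsub : (fun n : ℕ => ((n - d : ℕ) : ℝ)) ~[atTop] fun n => (n : ℝ) := by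
      refine (IsEquivalent.refl (u := fun n : ℕ => (n : ℝ))).add_const_of_norm_tendsto_atTop
        (c := -(d : ℝ)) ?_ |>.congr_left ?_
      · simpa [Function.comp_def] using tendsto_natCast_atTop_atTop
      · filter_upwards [eventually_ge_atTop d] with n hn
        push_cast [hn]
        ring
    refine ((factorial_add_isEquivalent d).comp_tendsto (tendsto_sub_atTop_nat d)).congr_left ?_
      |>.trans (IsEquivalent.refl.mul (hsub.pow d))
    filter_upwards [eventually_ge_atTop d] with n hn
    simp [Nat.sub_add_cancel hn]
  refine (hshift.symm.mul (IsEquivalent.refl (u := fun n : ℕ => ((n : ℝ) ^ d)⁻¹))).congr_left ?_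
    |>.congr_right ?_
  · filter_upwards [eventually_ge_atTop 1] with n hn
    have htoNat : ((n : ℤ) + -d).toNat = n - d := by omega
    have hpos : (n : ℝ) ^ d ≠ 0 := by positivity
    simp [htoNat, hpos]
  · filter_upwards with n
    simp [zpow_neg]

theorem stirling_approx_mul (a x : ℕ) :
    √(2 * ((a * x : ℕ) : ℝ) * π) * (((a * x : ℕ) : ℝ) / exp 1) ^ (a * x) =
      √a * ((a : ℝ) ^ a) ^ x * (√(2 * x * π) * ((x / exp 1) ^ x) ^ a) := by
  push_cast
  rw [show 2 * (a * x : ℝ) * π = a * (2 * x * π) by ring, sqrt_mul (Nat.cast_nonneg a),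
    mul_div_assoc, mul_pow, pow_mul, mul_comm a x, pow_mul]
  ring

theorem factorial_mul_factorial_div_isEquivalent {a b c d : ℕ} (ha : 0 < a) (hb : 0 < b)
    (hc : 0 < c) (hd : 0 < d) (h : a + b = c + d) :
    (fun x : ℕ => ((a * x)! * (b * x)! / ((c * x)! * (d * x)!) : ℝ)) ~[atTop]
      fun x => √(a * b / (c * d)) * ((a : ℝ) ^ a * b ^ b / (c ^ c * d ^ d)) ^ x := by
  have stirling {e : ℕ} (he : 0 < e) := Stirling.factorial_isEquivalent_stirling.comp_tendsto
    (tendsto_id.const_mul_atTop' he)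
  refine (((stirling ha).mul (stirling hb)).div ((stirling hc).mul (stirling hd))).congr_right ?_
  filter_upwards [eventually_ge_atTop 1] with x hx
  simp only [Function.comp_apply, id, Pi.mul_apply, Pi.div_apply, stirling_approx_mul]
  have hx' : (0 : ℝ) < x := by exact_mod_cast hx
  have hT_pos : 0 < √(2 * x * π) := by positivity
  have hU_pos : 0 < (x / exp 1) ^ x := by positivity
  set T := √(2 * x * π)
  set U := (x / exp 1) ^ x
  have hU : U ^ a * U ^ b = U ^ c * U ^ d := by rw [← pow_add, ← pow_add, h]
  have hc' : (0 : ℝ) < c := by exact_mod_cast hc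
  have hd' : (0 : ℝ) < d := by exact_mod_cast hd
  rw [sqrt_div' _ (by positivity), sqrt_mul (by positivity), sqrt_mul (by positivity), div_pow,
    mul_pow, mul_pow]
  clear_value T U
  field_simp
  exact hU

theorem factorial_toNat_mul_add_isEquivalent {a : ℕ} (ha : 0 < a) (r : ℤ) :
    (fun x : ℕ => ((((a * x : ℕ) : ℤ) + r).toNat ! : ℝ)) ~[atTop]
      fun x => ((a * x)! : ℝ) * (a * x : ℝ) ^ r := by
  simpa [Function.comp_def] using
    (factorial_toNat_add_isEquivalent r).comp_tendsto (tendsto_id.const_mul_atTop' ha)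

theorem factorial_toNat_ratio_isEquivalent {a b c d : ℕ} (ha : 0 < a) (hb : 0 < b)
    (hc : 0 < c) (hd : 0 < d) {r₁ r₂ r₃ r₄ : ℤ} (h : r₁ + r₂ = r₃ + r₄) :
    (fun x : ℕ => ((((a * x : ℕ) : ℤ) + r₁).toNat ! * (((b * x : ℕ) : ℤ) + r₂).toNat ! /
        ((((c * x : ℕ) : ℤ) + r₃).toNat ! * (((d * x : ℕ) : ℤ) + r₄).toNat !) : ℝ)) ~[atTop]
      fun x => ((a * x)! * (b * x)! / ((c * x)! * (d * x)!) : ℝ) *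
        ((a : ℝ) ^ r₁ * b ^ r₂ / (c ^ r₃ * d ^ r₄)) := by
  refine (((factorial_toNat_mul_add_isEquivalent ha r₁).mul
    (factorial_toNat_mul_add_isEquivalent hb r₂)).div
    ((factorial_toNat_mul_add_isEquivalent hc r₃).mul
    (factorial_toNat_mul_add_isEquivalent hd r₄))).congr_right ?_
  filter_upwards [eventually_ge_atTop 1] with x hx
  have hx' : (x : ℝ) ≠ 0 := by positivity
  have hxpow : (x : ℝ) ^ r₁ * (x : ℝ) ^ r₂ = (x : ℝ) ^ r₃ * (x : ℝ) ^ r₄ := by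
    rw [← zpow_add₀ hx', ← zpow_add₀ hx', h]
  have hc' : (c : ℝ) ≠ 0 := by positivity
  have hd' : (d : ℝ) ≠ 0 := by positivity
  simp only [Pi.mul_apply, Pi.div_apply, mul_zpow]
  field_simp
  exact hxpow

theorem pochR_natCast_add_one (j m : ℕ) : pochR (j + 1) m = ((j + m)! / j ! : ℝ) := by
  rw [eq_div_iff (by positivity), ← Nat.factorial_mul_ascFactorial, Nat.ascFactorial_eq_prod_range,
    pochR]
  push_cast
  ring_nf

theorem pochR_ratio_eq_factorial_ratio (k : ℕ) (s : ℤ) :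
    (fun x : ℕ => pochR (2 * x + s) (x - k - 1) / pochR (x + k + s) (x - k - 1)) =ᶠ[atTop]
      fun x => ((((3 * x : ℕ) : ℤ) + (s - k - 2)).toNat ! *
        (((1 * x : ℕ) : ℤ) + (k + s - 1)).toNat ! /
        ((((2 * x : ℕ) : ℤ) + (s - 1)).toNat ! * (((2 * x : ℕ) : ℤ) + (s - 2)).toNat !) : ℝ) := by
  filter_upwards [eventually_ge_atTop (k + 1 + s.natAbs)] with x hx
  obtain ⟨j₁, hj₁⟩ : ∃ j : ℕ, (j : ℤ) = 2 * x + s - 1 := ⟨_, Int.toNat_of_nonneg (by omega)⟩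
  obtain ⟨j₂, hj₂⟩ : ∃ j : ℕ, (j : ℤ) = x + k + s - 1 := ⟨_, Int.toNat_of_nonneg (by omega)⟩
  have hb₁ : 2 * (x : ℝ) + s = j₁ + 1 := by
    have := congrArg (Int.cast (R := ℝ)) hj₁; push_cast at this; linarith
  have hb₂ : (x : ℝ) + k + s = j₂ + 1 := by
    have := congrArg (Int.cast (R := ℝ)) hj₂; push_cast at this; linarith
  rw [hb₁, hb₂, pochR_natCast_add_one, pochR_natCast_add_one,
    show (((3 * x : ℕ) : ℤ) + (s - k - 2)).toNat = j₁ + (x - k - 1) by omega,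
    show (((1 * x : ℕ) : ℤ) + (k + s - 1)).toNat = j₂ by omega,
    show (((2 * x : ℕ) : ℤ) + (s - 1)).toNat = j₁ by omega,
    show (((2 * x : ℕ) : ℤ) + (s - 2)).toNat = j₂ + (x - k - 1) by omega]
  field_simp

theorem pochR_ratio_isEquivalent (k : ℕ) (s : ℤ) :
    (fun x : ℕ => pochR (2 * x + s) (x - k - 1) / pochR (x + k + s) (x - k - 1)) ~[atTop]
      fun x => (3 : ℝ) ^ (3 * (x : ℝ) + s - k - 3 / 2) / (2 : ℝ) ^ (4 * (x : ℝ) + 2 * s - 2) := by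
  have h := (factorial_toNat_ratio_isEquivalent (a := 3) (b := 1) (c := 2) (d := 2)
    (r₁ := s - k - 2) (r₂ := k + s - 1) (r₃ := s - 1) (r₄ := s - 2) (by norm_num) (by norm_num)
    (by norm_num) (by norm_num) (by ring)).trans
    ((factorial_mul_factorial_div_isEquivalent (by norm_num) (by norm_num) (by norm_num)
      (by norm_num) (by norm_num)).mul IsEquivalent.refl)
  refine (h.congr_left (pochR_ratio_eq_factorial_ratio k s).symm).congr_right ?_
  filter_upwards with x
  have h3pow : (3 : ℝ) ^ (3 * (x : ℝ) + s - k - 3 / 2) = √3 * 27 ^ x * 3 ^ (s - k - 2) := by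
    rw [show (3 * x + s - k - 3 / 2 : ℝ) = 1 / 2 + ((3 * x : ℕ) : ℝ) + ((s - k - 2 : ℤ) : ℝ) by
        push_cast; ring, rpow_add (by norm_num), rpow_add (by norm_num), rpow_natCast,
      rpow_intCast, ← sqrt_eq_rpow, pow_mul]
    norm_num
  have h2pow : (2 : ℝ) ^ (4 * (x : ℝ) + 2 * s - 2) = 2 * 16 ^ x * (2 ^ (s - 1) * 2 ^ (s - 2)) := by
    rw [← zpow_add₀ (by norm_num),
      show (4 * x + 2 * s - 2 : ℝ) = 1 + ((4 * x : ℕ) : ℝ) + ((s - 1 + (s - 2) : ℤ) : ℝ) by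
        push_cast; ring, rpow_add (by norm_num), rpow_add (by norm_num), rpow_natCast,
      rpow_intCast, pow_mul]
    norm_num
  rw [h3pow, h2pow]
  norm_num
  rw [div_pow]
  ring

theorem sum_range_natCast_sub_two_mul (p : ℕ) : ∑ i ∈ range p, ((p : ℝ) - 2 * i) = p := by
  induction p with
  | zero => simp
  | succ p ih =>
    have hshift (i : ℕ) : ((p + 1 : ℕ) : ℝ) - 2 * i = ((p : ℝ) - 2 * i) + 1 := by push_cast; ring
    simp only [sum_range_succ, hshift, sum_add_distrib, ih, sum_const, card_range, nsmul_eq_mul]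
    push_cast
    ring

/-- For fixed `k, p ≥ 0`, as `x → ∞`,
`P₂ = ∏_{i=0}^{p-1} (2x+p-2i)_{x-k-1}/(x+k+p-2i)_{x-k-1} ∼ 3^{3xp-pk-p/2}/2^{4xp}`. -/
theorem P2_asymptotics (k p : ℕ) :
    (fun x : ℕ => ∏ i ∈ Finset.range p,
        pochR (2 * (x : ℝ) + p - 2 * i) (x - k - 1) /
          pochR ((x : ℝ) + k + p - 2 * i) (x - k - 1)) ~[atTop]
    (fun x : ℕ =>
      (3 : ℝ) ^ (3 * (x : ℝ) * p - (p : ℝ) * k - (p : ℝ) / 2) /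
        (2 : ℝ) ^ (4 * (x : ℝ) * p)) := by
  have hfactor (i : ℕ) := pochR_ratio_isEquivalent k ((p : ℤ) - 2 * i)
  push_cast [← add_sub_assoc] at hfactor
  refine (IsEquivalent.finsetProd fun i _ => hfactor i).congr_right ?_
  filter_upwards with x
  rw [prod_div_distrib, ← rpow_sum_of_pos (by norm_num), ← rpow_sum_of_pos (by norm_num)]
  congr 2
  · simp only [show ∀ i : ℕ, 3 * (x : ℝ) + p - 2 * i - k - 3 / 2 = (p - 2 * i) + (3 * x - k - 3 / 2)
      from fun i => by ring, sum_add_distrib, sum_range_natCast_sub_two_mul, sum_const, card_range,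
      nsmul_eq_mul]
    ring
  · simp only [show ∀ i : ℕ, 4 * (x : ℝ) + 2 * (p - 2 * i) - 2 = 2 * (p - 2 * i) + (4 * x - 2)
      from fun i => by ring, sum_add_distrib, ← mul_sum, sum_range_natCast_sub_two_mul, sum_const,
      card_range, nsmul_eq_mul]
    ring
end

section
/- The corner correlation and the fourth root of the bulk correlation have the same log-asymptotics: ln ω_c(k,0) ∼ (1/4)·ln ω(k,0) ∼ k² ln(√3/4) as k → ∞. -/
open Filter Asymptotics

/-- The corner correlation `ω_c(k,0) = 3^{(k²+k)/2}/2^{2k²+k}` of the dent of size `k`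
in the 90 degree wedge with mixed boundary conditions (note `k²+k` is even). -/
noncomputable def omegaC (k : ℕ) : ℝ :=
  (3 : ℝ) ^ ((k ^ 2 + k) / 2) / (2 : ℝ) ^ (2 * k ^ 2 + k)

/-- The explicit bulk correlation `ω(k,0)` of the vertical bowtie with lobes of size
`k` (Theorem 7 of the paper). -/
noncomputable def omegaBulk (k : ℕ) : ℝ :=
  Real.Gamma (2 * (k : ℝ) + 1) * Real.Gamma ((k : ℝ) + 1 / 2) /
      (Real.pi ^ k * Real.Gamma ((k : ℝ) + 1) * Real.Gamma (2 * (k : ℝ) + 1 / 2)) *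
    (∏ i ∈ Finset.Icc 1 k,
      Real.Gamma (i : ℝ) * Real.Gamma (2 * (i : ℝ) - 1) /
        Real.Gamma ((k : ℝ) + i - 1 / 2)) ^ 2 *
    ((3 : ℝ) ^ (2 * k ^ 2) / (2 : ℝ) ^ (6 * k ^ 2 + 2 * k))

/-! With `c n = C(2n, n) / 4 ^ n` (`centralBinomRatio`), the half-integer values of Gamma are
`Γ(n + 1/2) = c n · n! · √π`, and the product `∏_{j<2k} j!` regroups into the pairs
`(2j)! (2j+1)! = 16^j (c j)² (j!)⁴ (2j+1)`. With these two facts every factorial in `ω(k,0)`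
cancels, leaving the exact identity `ω(k,0) = (√3/4)^{4k²} · R k`, where `R k`
(`bulkRemainder`) is a product of
`O(k)` factors `c n` (`n ≤ 2k`), `2j + 1` (`j < k`) and `π`. Since `1/(2n+1) ≤ c n ≤ 1`,
`|log R k| ≤ (4k+1) log (4k+1) = o(k²)`. On the other side `ω_c(k,0) = (√3/4)^{k²} (√3/2)^k`
exactly, so both `log ω_c(k,0)` and `¼ log ω(k,0)` are `k² log (√3/4) + o(k²)`, and
`log (√3/4) ≠ 0`. -/

open Real Finset
open scoped Nat

noncomputable def centralBinomRatio (n : ℕ) : ℝ := n.centralBinom / 4 ^ n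

lemma centralBinomRatio_pos (n : ℕ) : 0 < centralBinomRatio n := by
  unfold centralBinomRatio
  have := n.centralBinom_pos
  positivity

lemma centralBinomRatio_le_one (n : ℕ) : centralBinomRatio n ≤ 1 := by
  rw [centralBinomRatio, div_le_one (by positivity)]
  exact_mod_cast n.centralBinom_le_four_pow

lemma inv_two_mul_add_one_le_centralBinomRatio (n : ℕ) :
    ((2 * n + 1 : ℝ))⁻¹ ≤ centralBinomRatio n := by
  rcases n.eq_zero_or_pos with rfl | hn
  · simp [centralBinomRatio]
  rw [centralBinomRatio, inv_le_iff_one_le_mul₀' (by positivity), mul_div_assoc',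
    le_div_iff₀ (by positivity), one_mul]
  have := n.four_pow_le_two_mul_self_mul_centralBinom hn
  calc (4 : ℝ) ^ n ≤ 2 * n * n.centralBinom := by exact_mod_cast this
    _ ≤ (2 * n + 1) * n.centralBinom := by gcongr; linarith

lemma log_centralBinomRatio_nonpos (n : ℕ) : log (centralBinomRatio n) ≤ 0 :=
  log_nonpos (centralBinomRatio_pos n).le (centralBinomRatio_le_one n)

lemma neg_log_le_log_centralBinomRatio (n : ℕ) :
    -log (2 * n + 1) ≤ log (centralBinomRatio n) := by
  rw [← log_inv]
  exact log_le_log (by positivity) (inv_two_mul_add_one_le_centralBinomRatio n)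

lemma factorial_two_mul_eq (n : ℕ) :
    ((2 * n)! : ℝ) = 4 ^ n * centralBinomRatio n * (n ! : ℝ) ^ 2 := by
  have h := Nat.choose_mul_factorial_mul_factorial (n := 2 * n) (k := n) (by omega)
  rw [← Nat.centralBinom_eq_two_mul_choose, show 2 * n - n = n by omega] at h
  rw [centralBinomRatio, ← h]
  push_cast
  field_simp

lemma Gamma_nat_add_half_eq_centralBinomRatio (n : ℕ) :
    Gamma (n + 1 / 2) = centralBinomRatio n * n ! * √π := by
  induction n with
  | zero => norm_num [centralBinomRatio, ← Gamma_one_half_eq]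
  | succ n ih =>
    rw [Nat.cast_succ, add_right_comm, Gamma_add_one (by positivity), ih, Nat.factorial_succ,
      centralBinomRatio, centralBinomRatio, pow_succ]
    have h : ((n + 1 : ℕ) : ℝ) * (n + 1).centralBinom = 2 * (2 * n + 1) * n.centralBinom := by
      exact_mod_cast n.succ_mul_centralBinom_succ
    push_cast at h ⊢
    field_simp
    linear_combination (-2) * h

lemma prod_factorial_range_two_mul (k : ℕ) :
    ∏ j ∈ range (2 * k), j ! = ∏ j ∈ range k, (2 * j)! * (2 * j + 1)! := by
  induction k with
  | zero => simp
  | succ k ih => rw [mul_add_one, prod_range_succ, prod_range_succ, prod_range_succ, ih, mul_assoc]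

lemma prod_factorial_add_eq (k : ℕ) :
    ∏ j ∈ range k, ((k + j)! : ℝ) =
      ∏ j ∈ range k, 16 ^ j * centralBinomRatio j ^ 2 * (j ! : ℝ) ^ 3 * (2 * j + 1) := by
  have hsplit := prod_range_add (fun j => (j ! : ℝ)) k k
  have hdouble : ∏ j ∈ range (2 * k), (j ! : ℝ) =
      ∏ j ∈ range k,
        (j ! : ℝ) * (16 ^ j * centralBinomRatio j ^ 2 * (j ! : ℝ) ^ 3 * (2 * j + 1)) := by
    rw [← Nat.cast_prod, prod_factorial_range_two_mul, Nat.cast_prod]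
    refine prod_congr rfl fun j _ => ?_
    rw [Nat.factorial_succ]
    push_cast
    rw [factorial_two_mul_eq, show (16 : ℝ) ^ j = 4 ^ j * 4 ^ j by rw [← mul_pow]; norm_num]
    ring
  rw [← two_mul, hdouble, prod_mul_distrib] at hsplit
  exact (mul_left_cancel₀ (prod_ne_zero_iff.mpr fun j _ => by positivity) hsplit).symm

lemma prod_Gamma_eq (k : ℕ) :
    ∏ i ∈ Icc 1 k, Gamma (i : ℝ) * Gamma (2 * (i : ℝ) - 1) / Gamma ((k : ℝ) + i - 1 / 2) =
      (√π ^ k * ∏ j ∈ range k,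
        4 ^ j * (centralBinomRatio j * centralBinomRatio (k + j) * (2 * j + 1)))⁻¹ := by
  rw [← Ico_add_one_right_eq_Icc, prod_Ico_eq_prod_range, Nat.add_sub_cancel]
  have hterm : ∀ j : ℕ,
      Gamma ((1 + j : ℕ) : ℝ) * Gamma (2 * ((1 + j : ℕ) : ℝ) - 1) /
          Gamma ((k : ℝ) + (1 + j : ℕ) - 1 / 2) * ((k + j)! : ℝ) =
        (√π * (4 ^ j * (centralBinomRatio j * centralBinomRatio (k + j) * (2 * j + 1))))⁻¹ *
          (16 ^ j * centralBinomRatio j ^ 2 * (j ! : ℝ) ^ 3 * (2 * j + 1)) := by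
    intro j
    have e1 : ((1 + j : ℕ) : ℝ) = j + 1 := by push_cast; ring
    have e2 : 2 * ((j : ℝ) + 1) - 1 = ((2 * j : ℕ) : ℝ) + 1 := by push_cast; ring
    have e3 : (k : ℝ) + (j + 1) - 1 / 2 = ((k + j : ℕ) : ℝ) + 1 / 2 := by push_cast; ring
    rw [e1, e2, e3, Gamma_nat_eq_factorial, Gamma_nat_eq_factorial,
      Gamma_nat_add_half_eq_centralBinomRatio, factorial_two_mul_eq]
    have := centralBinomRatio_pos j
    have := centralBinomRatio_pos (k + j)
    rw [show (16 : ℝ) ^ j = 4 ^ j * 4 ^ j by rw [← mul_pow]; norm_num]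
    field_simp
  refine mul_right_cancel₀ (b := ∏ j ∈ range k, ((k + j)! : ℝ)) (by positivity) ?_
  rw [← prod_mul_distrib, prod_congr rfl fun j _ => hterm j, prod_mul_distrib,
    prod_factorial_add_eq, prod_inv_distrib, prod_mul_distrib, prod_const, card_range]

lemma omegaBulk_prefactor_eq (k : ℕ) :
    Gamma (2 * (k : ℝ) + 1) * Gamma ((k : ℝ) + 1 / 2) /
        (π ^ k * Gamma ((k : ℝ) + 1) * Gamma (2 * (k : ℝ) + 1 / 2)) =
      centralBinomRatio k / (π ^ k * centralBinomRatio (2 * k)) := by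
  have e1 : 2 * (k : ℝ) + 1 = ((2 * k : ℕ) : ℝ) + 1 := by push_cast; ring
  have e2 : 2 * (k : ℝ) + 1 / 2 = ((2 * k : ℕ) : ℝ) + 1 / 2 := by push_cast; ring
  rw [e1, e2, Gamma_nat_eq_factorial, Gamma_nat_eq_factorial,
    Gamma_nat_add_half_eq_centralBinomRatio, Gamma_nat_add_half_eq_centralBinomRatio]
  have := centralBinomRatio_pos k
  have := centralBinomRatio_pos (2 * k)
  field_simp

noncomputable def bulkRemainder (k : ℕ) : ℝ :=
  centralBinomRatio k / (centralBinomRatio (2 * k) * π ^ (2 * k) *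
    (∏ j ∈ range k, centralBinomRatio j * centralBinomRatio (k + j) * (2 * j + 1)) ^ 2)

lemma bulkRemainder_pos (k : ℕ) : 0 < bulkRemainder k := by
  have hc := centralBinomRatio_pos
  refine div_pos (hc k)
    (mul_pos (mul_pos (hc _) (by positivity)) (pow_pos (prod_pos fun j _ => ?_) 2))
  have := hc j
  have := hc (k + j)
  positivity

lemma omegaBulk_eq (k : ℕ) : omegaBulk k = (√3 / 4) ^ (4 * k ^ 2) * bulkRemainder k := by
  have hgauss : 4 * ∑ j ∈ range k, j + 2 * k = 2 * k ^ 2 := by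
    have := sum_range_id_mul_two k
    rcases k with _ | k
    · simp
    · rw [Nat.add_sub_cancel] at this; nlinarith
  have h3 : (√3 / 4 : ℝ) ^ (4 * k ^ 2) = 3 ^ (2 * k ^ 2) / 2 ^ (8 * k ^ 2) := by
    rw [div_pow, show 4 * k ^ 2 = 2 * (2 * k ^ 2) by ring, pow_mul, sq_sqrt (by norm_num),
      show (4 : ℝ) = 2 ^ 2 by norm_num, ← pow_mul]
    ring_nf
  have h2 :
      (2 : ℝ) ^ (8 * k ^ 2) = 2 ^ (6 * k ^ 2 + 2 * k) * ((4 : ℝ) ^ ∑ j ∈ range k, j) ^ 2 := by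
    rw [show (4 : ℝ) = 2 ^ 2 by norm_num, ← pow_mul, ← pow_mul, ← pow_add]
    congr 1
    linarith
  have hpi : (√π ^ k) ^ 2 = π ^ k := by rw [← pow_mul, mul_comm, pow_mul, sq_sqrt pi_pos.le]
  rw [omegaBulk, omegaBulk_prefactor_eq, prod_Gamma_eq, prod_mul_distrib, prod_pow_eq_pow_sum, h3,
    h2, bulkRemainder]
  have := centralBinomRatio_pos k
  have := centralBinomRatio_pos (2 * k)
  field_simp
  rw [hpi]
  ring

lemma omegaC_eq (k : ℕ) : omegaC k = (√3 / 4) ^ (k ^ 2) * (√3 / 2) ^ k := by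
  obtain ⟨m, hm⟩ : Even (k ^ 2 + k) := by
    simpa [sq, ← Nat.mul_succ] using Nat.even_mul_succ_self k
  rw [omegaC, div_pow, div_pow, ← mul_div_mul_comm, ← pow_add, show (4 : ℝ) = 2 ^ 2 by norm_num,
    ← pow_mul, ← pow_add, hm, show (m + m) / 2 = m by omega, show m + m = 2 * m by ring, pow_mul,
    sq_sqrt (by norm_num)]

lemma log_bulkRemainder (k : ℕ) :
    log (bulkRemainder k) = log (centralBinomRatio k) - log (centralBinomRatio (2 * k)) -
      2 * k * log π - 2 * ∑ j ∈ range k, (log (centralBinomRatio j) +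
        log (centralBinomRatio (k + j)) + log (2 * j + 1)) := by
  have hc := centralBinomRatio_pos
  have hprod : ∀ j ∈ range k, centralBinomRatio j * centralBinomRatio (k + j) * (2 * j + 1) ≠ 0 :=
    fun j _ => by have := hc j; have := hc (k + j); positivity
  have hP := pow_ne_zero 2 (prod_ne_zero_iff.mpr hprod)
  have hden : centralBinomRatio (2 * k) * π ^ (2 * k) ≠ 0 := by have := hc (2 * k); positivity
  rw [bulkRemainder, log_div (hc k).ne' (mul_ne_zero hden hP), log_mul hden hP,
    log_mul (hc (2 * k)).ne' (by positivity), log_pow, log_pow, log_prod hprod]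
  simp only [fun j => log_mul (mul_pos (hc j) (hc (k + j))).ne'
      (by positivity : (2 * j + 1 : ℝ) ≠ 0), fun j => log_mul (hc j).ne' (hc (k + j)).ne']
  push_cast
  ring

lemma abs_log_bulkRemainder_le (k : ℕ) :
    |log (bulkRemainder k)| ≤ (4 * k + 1) * log (4 * k + 1) := by
  set M := log (4 * k + 1 : ℝ)
  have hlog_le : ∀ n : ℕ, n ≤ 2 * k → log (2 * n + 1) ≤ M := fun n hn =>
    log_le_log (by positivity) (by have : (n : ℝ) ≤ 2 * k := (by exact_mod_cast hn); linarith)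
  have hc : ∀ n : ℕ, n ≤ 2 * k →
      -M ≤ log (centralBinomRatio n) ∧ log (centralBinomRatio n) ≤ 0 :=
    fun n hn => ⟨(neg_le_neg (hlog_le n hn)).trans (neg_log_le_log_centralBinomRatio n),
      log_centralBinomRatio_nonpos n⟩
  have hterm : ∀ j ∈ range k, -(2 * M) ≤ log (centralBinomRatio j) +
      log (centralBinomRatio (k + j)) + log (2 * j + 1) ∧ log (centralBinomRatio j) +
      log (centralBinomRatio (k + j)) + log (2 * j + 1) ≤ M := by
    intro j hj
    have hjk := (mem_range.mp hj).le
    have h1 := hc j (by omega)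
    have h2 := hc (k + j) (by omega)
    have h3 := hlog_le j (by omega)
    have h4 : 0 ≤ log (2 * j + 1 : ℝ) := log_nonneg (by linarith [j.cast_nonneg (α := ℝ)])
    constructor <;> linarith
  have hsum_le := sum_le_card_nsmul _ _ _ fun j hj => (hterm j hj).2
  have hsum_ge := card_nsmul_le_sum _ _ _ fun j hj => (hterm j hj).1
  simp only [card_range, nsmul_eq_mul] at hsum_le hsum_ge
  have hpi_nonneg : 0 ≤ log π := log_nonneg (by linarith [pi_gt_three])
  have hpi_le : k * log π ≤ k * M := by
    rcases k.eq_zero_or_pos with rfl | hk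
    · simp
    refine mul_le_mul_of_nonneg_left (log_le_log pi_pos ?_) k.cast_nonneg
    have : (1 : ℝ) ≤ k := by exact_mod_cast hk
    linarith [pi_lt_four]
  have hk := hc k (by omega)
  have h2k := hc (2 * k) le_rfl
  have hkM : 0 ≤ k * M :=
    mul_nonneg k.cast_nonneg (log_nonneg (by linarith [k.cast_nonneg (α := ℝ)]))
  rw [log_bulkRemainder, abs_le]
  constructor <;> nlinarith

lemma isLittleO_log_bulkRemainder :
    (fun k => log (bulkRemainder k)) =o[atTop] fun k : ℕ => (k : ℝ) ^ 2 := by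
  have htends : Tendsto (fun k : ℕ => 4 * (k : ℝ) + 1) atTop atTop :=
    tendsto_atTop_add_const_right _ _
      (tendsto_natCast_atTop_atTop.const_mul_atTop (by norm_num))
  have hlin : (fun k : ℕ => 4 * (k : ℝ) + 1) =O[atTop] fun k => (k : ℝ) := by
    refine IsBigO.of_bound 5 ((eventually_ge_atTop 1).mono fun k hk => ?_)
    have : (1 : ℝ) ≤ k := by exact_mod_cast hk
    rw [Real.norm_of_nonneg (by positivity), Real.norm_of_nonneg (by positivity)]
    linarith
  have hlog : (fun k : ℕ => log (4 * (k : ℝ) + 1)) =o[atTop] fun k => (k : ℝ) :=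
    (isLittleO_log_id_atTop.comp_tendsto htends).trans_isBigO hlin
  refine (isBigO_of_le _ fun k => ?_).trans_isLittleO ((hlin.mul_isLittleO hlog).congr_right
    fun k => (sq (k : ℝ)).symm)
  rw [Real.norm_eq_abs, Real.norm_of_nonneg
    (mul_nonneg (by positivity) (log_nonneg (by linarith [k.cast_nonneg (α := ℝ)])))]
  exact abs_log_bulkRemainder_le k

lemma log_omegaC (k : ℕ) :
    log (omegaC k) = (k : ℝ) ^ 2 * log (√3 / 4) + log (√3 / 2) * k := by
  rw [omegaC_eq, log_mul (by positivity) (by positivity), log_pow, log_pow]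
  push_cast
  ring

lemma log_omegaBulk (k : ℕ) :
    log (omegaBulk k) = 4 * ((k : ℝ) ^ 2 * log (√3 / 4)) + log (bulkRemainder k) := by
  rw [omegaBulk_eq, log_mul (by positivity) (bulkRemainder_pos k).ne', log_pow]
  push_cast
  ring

lemma Asymptotics.IsLittleO.isEquivalent_mul_const_add {α 𝕜 : Type*} [NormedField 𝕜]
    {l : Filter α} {g r : α → 𝕜} {L : 𝕜} (hr : r =o[l] g) (hL : L ≠ 0) :
    (fun x => g x * L + r x) ~[l] fun x => g x * L :=
  IsEquivalent.refl.add_isLittleO ((hr.const_mul_right hL).congr_right fun _ => mul_comm _ _)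

/-- **Corollary 9**: the corner correlation and the fourth root of the bulk correlation
have the same log-asymptotics:
`ln ω_c(k,0) ∼ (1/4)·ln ω(k,0) ∼ k² ln(√3/4)` as `k → ∞`. -/
theorem same_log_asymptotics :
    ((fun k : ℕ => Real.log (omegaC k)) ~[atTop]
        fun k : ℕ => (1 / 4 : ℝ) * Real.log (omegaBulk k)) ∧
    ((fun k : ℕ => Real.log (omegaC k)) ~[atTop]
        fun k : ℕ => (k : ℝ) ^ 2 * Real.log (Real.sqrt 3 / 4)) := by
  have hL : log (√3 / 4) ≠ 0 := by
    refine (log_neg (by positivity) ?_).ne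
    rw [div_lt_one (by norm_num), sqrt_lt' (by norm_num)]
    norm_num
  have hk : (fun k : ℕ => (k : ℝ)) =o[atTop] fun k => (k : ℝ) ^ 2 := by
    simpa [Function.comp_def] using (isLittleO_pow_pow_atTop_of_lt one_lt_two).comp_tendsto
      tendsto_natCast_atTop_atTop
  have hC : (fun k => log (omegaC k)) ~[atTop] fun k : ℕ => (k : ℝ) ^ 2 * log (√3 / 4) := by
    simpa only [log_omegaC] using (hk.const_mul_left (log (√3 / 2))).isEquivalent_mul_const_add hL
  have hB : (fun k => 1 / 4 * log (omegaBulk k)) ~[atTop]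
      fun k : ℕ => (k : ℝ) ^ 2 * log (√3 / 4) := by
    refine ((isLittleO_log_bulkRemainder.const_mul_left (1 / 4)).isEquivalent_mul_const_add
      hL).congr_left (.of_forall fun k => ?_)
    simp only [log_omegaBulk]
    ring
  exact ⟨hC.trans hB.symm, hC⟩
end
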